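/- arXiv:2106.05957 — 2 statements merged into one kernel-verified Lean document; each statement's English description precedes it below -/
import Mathlib

section
/- A random choice rule ρ has a Logit-EU representation (i.e., there is a continuous, strictly increasing u: X_{n+1} → ℝ such that ρ(a,S) = exp(∑_c u(c)·a(c_{n+1})) / ∑_{a'∈S} exp(∑_c u(c)·a'(c_{n+1})) for every a∈S and S∈𝒮) if and only if the collection of minimal separators is 𝒜 = {{n+1}} and ρ satisfies Full-support, Correctly Perceived Independence, Correctly Perceived Dominance, and Correctly Perceived Continuity. -/
open scoped Classical BigOperators
open Filter

namespace SubjCausality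

/-- Vectors of realized values of variables 1,…,n+1 (coordinate `j : Fin (n+1)`
corresponds to variable `j+1`; the last coordinate is the consequence). -/
abbrev Vec (n : ℕ) := Fin (n + 1) → ℝ

/-- Nodes 0,1,…,n+1 of a causal model. -/
abbrev Node (n : ℕ) := Fin (n + 2)

/-- An action: a finite-support probability distribution over vectors of covariates and
the consequence, with consequence values in `C`. -/
structure Act (n : ℕ) (C : Set ℝ) where
  mass : Vec n →₀ ℝ
  nonneg : ∀ y, 0 ≤ mass y
  total : mass.sum (fun _ p => p) = 1
  outC : ∀ y ∈ mass.support, y (Fin.last n) ∈ C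

/-- The grand state space 𝒳 = 𝒳₀ × 𝒳₋₀: an action paired with a realization vector. -/
abbrev Omega (n : ℕ) (C : Set ℝ) := Act n C × Vec n

variable {n : ℕ} {C : Set ℝ}

/-- The mixture α p + (1-α) r of two actions. -/
noncomputable def mix (α : ℝ) (h0 : 0 ≤ α) (h1 : α ≤ 1) (p r : Act n C) : Act n C where
  mass := α • p.mass + (1 - α) • r.mass
  nonneg := by
    intro y
    have hp := p.nonneg y
    have hr := r.nonneg y
    have hy : (α • p.mass + (1 - α) • r.mass) y = α * p.mass y + (1 - α) * r.mass y := by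
      simp [Finsupp.smul_apply, smul_eq_mul]
    rw [hy]; nlinarith
  total := by
    rw [Finsupp.sum_add_index' (fun _ => rfl) (fun _ _ _ => rfl)]
    rw [Finsupp.sum_smul_index (fun _ => rfl), Finsupp.sum_smul_index (fun _ => rfl)]
    have h1' : (p.mass.sum fun _ c => α * c) = α * p.mass.sum fun _ c => c :=
      (Finsupp.mul_sum _ _).symm
    have h2' : (r.mass.sum fun _ c => (1 - α) * c) = (1 - α) * r.mass.sum fun _ c => c :=
      (Finsupp.mul_sum _ _).symm
    rw [h1', h2', p.total, r.total]; ring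
  outC := by
    intro y hy
    rw [Finsupp.mem_support_iff] at hy
    have hy' : α * p.mass y + (1 - α) * r.mass y ≠ 0 := by
      simpa [Finsupp.smul_apply, smul_eq_mul] using hy
    by_cases hp : p.mass y = 0
    · have hr : r.mass y ≠ 0 := by
        intro h0'; apply hy'; rw [hp, h0']; ring
      exact r.outC y (Finsupp.mem_support_iff.mpr hr)
    · exact p.outC y (Finsupp.mem_support_iff.mpr hp)

/-- Marginal probability under action `a` of the event that the variables indexed by the
node set `I` take the values prescribed by `y` (node `j+1` corresponds to coordinate `j`). -/
noncomputable def margP (a : Act n C) (I : Finset (Node n)) (y : Vec n) : ℝ :=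
  ∑ z ∈ a.mass.support.filter (fun z => ∀ j : Fin (n + 1), (j.succ : Node n) ∈ I → z j = y j),
    a.mass z

/-- The support of the `j`-th covariate (variable `j+1`, `j : Fin n`) of an action. -/
noncomputable def covSupp (a : Act n C) (j : Fin n) : Finset ℝ :=
  a.mass.support.image (fun y => y j.castSucc)

/-- Menus: finite sets of at least two actions for which the support of the joint
distribution of the covariates is the product of the marginal supports, for all actions. -/
def IsMenu (S : Finset (Act n C)) : Prop :=
  2 ≤ S.card ∧
    ∀ a ∈ S, ∀ b ∈ S, ∀ x : Fin n → ℝ,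
      ((∀ j : Fin n, x j ∈ covSupp a j) ↔ ∃ y ∈ b.mass.support, ∀ j : Fin n, y j.castSucc = x j)

/-- A random choice rule. -/
structure RCR (n : ℕ) (C : Set ℝ) where
  prob : Act n C → Finset (Act n C) → ℝ
  nonneg : ∀ a S, 0 ≤ prob a S
  le_one : ∀ a S, prob a S ≤ 1
  sum_one : ∀ S, IsMenu S → ∑ a ∈ S, prob a S = 1
  not_mem : ∀ a S, a ∉ S → prob a S = 0

/-- Probability of the event `E` for the mass function `μ` supported inside `D`. -/
noncomputable def pr (D : Finset (Omega n C)) (μ : Omega n C → ℝ) (E : Set (Omega n C)) : ℝ :=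
  ∑ ω ∈ D.filter (fun ω => ω ∈ E), μ ω

/-- Conditional probability. -/
noncomputable def cpr (D : Finset (Omega n C)) (μ : Omega n C → ℝ) (E F : Set (Omega n C)) : ℝ :=
  pr D μ (E ∩ F) / pr D μ F

/-- The parents of node `i` in the graph `R`. -/
def parents (R : Node n → Node n → Prop) (i : Node n) : Set (Node n) := {k | R k i}

/-- The event that the variables indexed by `J` agree with the realization `ω`. -/
def agreeEvent (J : Set (Node n)) (ω : Omega n C) : Set (Omega n C) :=
  {ω' | ((0 : Node n) ∈ J → ω'.1 = ω.1) ∧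
    ∀ j : Fin (n + 1), (j.succ : Node n) ∈ J → ω'.2 j = ω.2 j}

/-- The value `p_R(ω)` of the `R`-factorized distribution `p_R` at `ω`, where `p` is
the distribution with mass function `μ` supported inside `D`:
`p_R(x) = ∏_j p(x_j | x_{R(j)})`. -/
noncomputable def pRval (D : Finset (Omega n C)) (μ : Omega n C → ℝ)
    (R : Node n → Node n → Prop) (ω : Omega n C) : ℝ :=
  cpr D μ (agreeEvent {0} ω) (agreeEvent (parents R 0) ω) *
    ∏ j : Fin (n + 1),
      cpr D μ (agreeEvent {(j.succ : Node n)} ω) (agreeEvent (parents R j.succ) ω)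

/-- `p_R(c_{n+1} | a)`: the probability under `p_R` of consequence `c` given action `a`. -/
noncomputable def predOut (D : Finset (Omega n C)) (μ : Omega n C → ℝ)
    (R : Node n → Node n → Prop) (a : Act n C) (c : ℝ) : ℝ :=
  (∑ ω ∈ D.filter (fun ω => ω.1 = a ∧ ω.2 (Fin.last n) = c), pRval D μ R ω) /
    (∑ ω ∈ D.filter (fun ω => ω.1 = a), pRval D μ R ω)

/-- `p_R(x_E | a)`: the probability under `p_R` of the variables indexed by `E` agreeing
with `x`, given action `a`. -/
noncomputable def predVarsCond (D : Finset (Omega n C)) (μ : Omega n C → ℝ)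
    (R : Node n → Node n → Prop) (a : Act n C) (E : Finset (Node n)) (x : Vec n) : ℝ :=
  (∑ ω ∈ D.filter
      (fun ω => ω.1 = a ∧ ∀ j : Fin (n + 1), (j.succ : Node n) ∈ E → ω.2 j = x j),
    pRval D μ R ω) /
    (∑ ω ∈ D.filter (fun ω => ω.1 = a), pRval D μ R ω)

/-- The values taken by coordinate `j` across the actions in `S`. -/
noncomputable def coordVals (S : Finset (Act n C)) (j : Fin (n + 1)) : Finset ℝ :=
  S.biUnion (fun a => a.mass.support.image (fun y => y j))

/-- All vectors whose coordinates each appear in the corresponding marginal support of `S`. -/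
noncomputable def grid (S : Finset (Act n C)) : Finset (Vec n) :=
  Fintype.piFinset (fun j => coordVals S j)

/-- A finite set containing the support of any distribution over `Omega` generated by
choices from `S` together with its `R`-factorized version. -/
noncomputable def extSupport (S : Finset (Act n C)) : Finset (Omega n C) :=
  S ×ˢ grid S

/-- The joint mass on `Omega` induced by choosing action `a` with weight `w a`. -/
noncomputable def wMass (w : Act n C → ℝ) : Omega n C → ℝ := fun ω => w ω.1 * ω.1.mass ω.2

/-- The joint mass `ρ^S`. -/
noncomputable def rhoMass (ρ : RCR n C) (S : Finset (Act n C)) : Omega n C → ℝ :=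
  wMass (fun a => ρ.prob a S)

/-- Expected utility `∫ u(c) d p_R(c_{n+1}|a)` of action `a`, where `p` is the joint
distribution on `Omega` induced by the choice weights `w` over the menu `S`. -/
noncomputable def menuEU (S : Finset (Act n C)) (w : Act n C → ℝ)
    (R : Node n → Node n → Prop) (u : ℝ → ℝ) (a : Act n C) : ℝ :=
  ∑ c ∈ coordVals S (Fin.last n), u c * predOut (extSupport S) (wMass w) R a c

/-! ### DAG notions -/

/-- `R` is acyclic. -/
def IsDAGRel (R : Node n → Node n → Prop) : Prop := ∀ i, ¬ Relation.TransGen R i i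

/-- No variable causes the action. -/
def Uninformed (R : Node n → Node n → Prop) : Prop := ∀ i : Node n, i ≠ 0 → ¬ R i 0

/-- An active path from 0 to n+1 in `R`: a sequence (i₀ = 0, …, i_m = n+1) with
consecutive links. -/
def IsAP (R : Node n → Node n → Prop) (l : List (Node n)) : Prop :=
  l ≠ [] ∧ l.head? = some 0 ∧ l.getLast? = some (Fin.last (n + 1)) ∧ l.Chain' R

/-- Nontrivial: there is a causal chain from the action to the consequence whose
intermediate nodes are variables. -/
def NontrivialDAG (R : Node n → Node n → Prop) : Prop :=
  ∃ l : List (Node n), IsAP R l ∧ ∀ x ∈ l.tail, x ≠ (0 : Node n)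

/-- Perfect: no v-colliders. -/
def IsPerfect (R : Node n → Node n → Prop) : Prop :=
  ∀ i j k : Node n, i ≠ j → R i k → R j k → R i j ∨ R j i

/-- A minimal active path (R-MAP). -/
def IsMAP (R : Node n → Node n → Prop) (l : List (Node n)) : Prop :=
  IsAP R l ∧
    ∀ j j' : Fin l.length, (j' : ℕ) ≠ (j : ℕ) + 1 → ¬ R (l.get j) (l.get j')

/-! ### Subjective causality representations -/

/-- `ρ` has a subjective causality representation `(R, u)`. -/
def HasSCR (ρ : RCR n C) (R : Node n → Node n → Prop) (u : ℝ → ℝ) : Prop :=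
  IsDAGRel R ∧ Uninformed R ∧ NontrivialDAG R ∧
    ContinuousOn u C ∧ StrictMonoOn u C ∧
    ∀ S : Finset (Act n C), IsMenu S → ∀ a ∈ S,
      ρ.prob a S =
        Real.exp (menuEU S (fun b => ρ.prob b S) R u a) /
          ∑ b ∈ S, Real.exp (menuEU S (fun b' => ρ.prob b' S) R u b)

/-- `ρ` has a perfect subjective causality representation. -/
def HasPerfectSCR (ρ : RCR n C) : Prop :=
  ∃ (R : Node n → Node n → Prop) (u : ℝ → ℝ), HasSCR ρ R u ∧ IsPerfect R

/-! ### Independence, separation, and minimal separators -/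

/-- The node set `N = {1,…,n+1}` of variables. -/
def varNodes (n : ℕ) : Finset (Node n) := Finset.univ.erase 0

/-- `X_I` is independent of `X_J` within the menu `S`. -/
def IndepWithin (S : Finset (Act n C)) (I J : Finset (Node n)) : Prop :=
  (∀ a ∈ S, ∀ b ∈ S, ∀ y : Vec n, margP a I y = margP b I y) ∧
    (∀ a ∈ S, ∀ y : Vec n, margP a (I ∪ J) y = margP a I y * margP a J y)

/-- The set `I ⊆ N` separates for `ρ`. -/
def Separates (ρ : RCR n C) (I : Finset (Node n)) : Prop :=
  ∀ a b : Act n C, IsMenu ({a, b} : Finset (Act n C)) →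
    IndepWithin ({a, b} : Finset (Act n C)) I (varNodes n \ I) →
    ρ.prob a ({a, b} : Finset (Act n C)) = 1 / 2

/-- The collection 𝒜 of minimal separators. -/
def MinSeps (ρ : RCR n C) : Set (Finset (Node n)) :=
  {I | I ⊆ varNodes n ∧ Separates ρ I ∧ ∀ J ⊂ I, ¬ Separates ρ J}

/-- The recursive ordering `A*_1, …, A*_{|𝒜|}` of the minimal separators
(`A i` is `A*_{i+1}` in the paper's notation). -/
def IsSepOrdering (ρ : RCR n C) {m : ℕ} (A : Fin (m + 1) → Finset (Node n)) : Prop :=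
  Function.Injective A ∧
    (∀ i, A i ∈ MinSeps ρ) ∧
    (∀ B ∈ MinSeps ρ, ∃ i, A i = B) ∧
    A (Fin.last m) = ({Fin.last (n + 1)} : Finset (Node n)) ∧
    ∀ i : Fin m,
      (∀ B ∈ MinSeps ρ, (∀ j : Fin (m + 1), (i : ℕ) < (j : ℕ) → B ≠ A j) →
        B ∩ A i.succ ⊆ A i.castSucc ∩ A i.succ) ∧
      (∀ a b : Act n C, IsMenu ({a, b} : Finset (Act n C)) →
        IndepWithin ({a, b} : Finset (Act n C)) (A i.castSucc ∩ A i.succ)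
          (varNodes n \ (A i.castSucc ∩ A i.succ)) →
        IndepWithin ({a, b} : Finset (Act n C)) (A i.succ \ A i.castSucc)
          (A i.castSucc \ A i.succ) →
        ρ.prob a ({a, b} : Finset (Act n C)) = 1 / 2)

/-- Prepend the convention `A*_0 = {0}` to an ordering of the minimal separators. -/
def withZero {m : ℕ} (A : Fin (m + 1) → Finset (Node n)) : Fin (m + 2) → Finset (Node n) :=
  Fin.cases ({0} : Finset (Node n)) A

/-- `j` is revealed to cause `k` for `ρ`. -/
def RevealedCause (ρ : RCR n C) (j k : Node n) : Prop :=
  ∀ (R : Node n → Node n → Prop) (u : ℝ → ℝ), HasSCR ρ R u → R j k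

/-! ### Distributions on 𝒳, equivalence of DAGs, fundamental links, N* -/

/-- `μ` (supported inside `D`) is a finite-support distribution on `𝒳 = 𝒳₀ × 𝒳₋₀`
with consequence values in `C`. -/
def IsFinDist (D : Finset (Omega n C)) (μ : Omega n C → ℝ) : Prop :=
  (∀ ω, 0 ≤ μ ω) ∧ (∀ ω, ω ∉ D → μ ω = 0) ∧ (∑ ω ∈ D, μ ω = 1) ∧
    ∀ ω ∈ D, μ ω ≠ 0 → ω.2 (Fin.last n) ∈ C

/-- Two DAGs are equivalent if they induce the same factorized distribution `p_Q = p_{Q'}`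
for every finite-support `p ∈ Δ(𝒳)`. -/
def DagEquiv (C : Set ℝ) {n : ℕ} (Q Q' : Node n → Node n → Prop) : Prop :=
  ∀ (D : Finset (Omega n C)) (μ : Omega n C → ℝ), IsFinDist D μ →
    ∀ ω ∈ D, μ ω ≠ 0 → pRval D μ Q ω = pRval D μ Q' ω

/-- The link `j Q k` is fundamental in `Q` (written `j Q̂ k`). -/
def FundamentalLink (C : Set ℝ) {n : ℕ} (Q : Node n → Node n → Prop) (j k : Node n) : Prop :=
  Q j k ∧ ∀ G : Node n → Node n → Prop,
    IsDAGRel G → Uninformed G → DagEquiv C Q G → G j k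

/-- The restriction `Q ∩ (M × M)` of a relation to a node set. -/
def restrictRel (Q : Node n → Node n → Prop) (M : Finset (Node n)) :
    Node n → Node n → Prop :=
  fun i j => Q i j ∧ i ∈ M ∧ j ∈ M

/-- The marginal on the consequence of `p_Q(·|a)` agrees with that of `p_{Q ∩ M×M}(·|a)`
for every finite-support `p ∈ Δ(𝒳)` and every action `a`. -/
def OutcomeEquivOn (C : Set ℝ) {n : ℕ} (Q : Node n → Node n → Prop)
    (M : Finset (Node n)) : Prop :=
  ∀ (D : Finset (Omega n C)) (μ : Omega n C → ℝ), IsFinDist D μ →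
    ∀ (a : Act n C) (c : ℝ), predOut D μ Q a c = predOut D μ (restrictRel Q M) a c

/-- `M` is the minimal node set `N*(Q)`. -/
def IsNStar (C : Set ℝ) {n : ℕ} (Q : Node n → Node n → Prop) (M : Finset (Node n)) : Prop :=
  OutcomeEquivOn C Q M ∧ ∀ M' : Finset (Node n), OutcomeEquivOn C Q M' → M ⊆ M'

/-- A well-behaved DAG: perfect, uninformed, nontrivial, and `R ⊆ N*(R) × N*(R)`
(where `M = N*(R)`). -/
def WellBehaved (C : Set ℝ) {n : ℕ} (R : Node n → Node n → Prop)
    (M : Finset (Node n)) : Prop :=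
  IsDAGRel R ∧ Uninformed R ∧ NontrivialDAG R ∧ IsPerfect R ∧ IsNStar C R M ∧
    ∀ i j : Node n, R i j → i ∈ M ∧ j ∈ M

/-! ### Cliques and junction trees -/

/-- A clique of the skeleton of `R`. -/
def IsClique (R : Node n → Node n → Prop) (Cq : Finset (Node n)) : Prop :=
  ∀ i ∈ Cq, ∀ j ∈ Cq, i ≠ j → (R i j ∨ R j i)

/-- A maximal clique of the skeleton of `R`. -/
def IsMaxClique (R : Node n → Node n → Prop) (Cq : Finset (Node n)) : Prop :=
  IsClique R Cq ∧ ∀ Cq' : Finset (Node n), IsClique R Cq' → Cq ⊆ Cq' → Cq = Cq'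

/-- A maximal clique junction tree for `R`: an enumeration of all maximal cliques
along a path satisfying the running-intersection property. -/
def IsMCJT (R : Node n → Node n → Prop) {m : ℕ} (Cs : Fin (m + 1) → Finset (Node n)) : Prop :=
  Function.Injective Cs ∧
    (∀ i, IsMaxClique R (Cs i)) ∧
    (∀ Cq : Finset (Node n), IsMaxClique R Cq → ∃ i, Cs i = Cq) ∧
    ∀ i k j : Fin (m + 1), i ≤ k → k ≤ j → Cs i ∩ Cs j ⊆ Cs k

/-! ### Conditionals of the joint choice distribution, correct perception, axioms -/

/-- The event that the variables indexed by `J` take the values prescribed by `y`. -/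
def vecEvent (J : Finset (Node n)) (y : Vec n) : Set (Omega n C) :=
  {ω | ∀ j : Fin (n + 1), (j.succ : Node n) ∈ J → ω.2 j = y j}

/-- `ρ^S(y_E | y_J)`. -/
noncomputable def condVars (ρ : RCR n C) (S : Finset (Act n C))
    (E J : Finset (Node n)) (y : Vec n) : ℝ :=
  pr (extSupport S) (rhoMass ρ S) (vecEvent (E ∪ J) y) /
    pr (extSupport S) (rhoMass ρ S) (vecEvent J y)

/-- `y` is in the support of (the 𝒳₋₀-marginal of) `ρ^S`. -/
def aeVec (ρ : RCR n C) (S : Finset (Act n C)) (y : Vec n) : Prop :=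
  0 < pr (extSupport S) (rhoMass ρ S) {ω | ω.2 = y}

/-- `a(y_E | y_J)`: conditional probability within a single action. -/
noncomputable def acond (a : Act n C) (E J : Finset (Node n)) (y : Vec n) : ℝ :=
  margP a (E ∪ J) y / margP a J y

/-- A correctly perceived menu (relative to the ordering `A` of the minimal separators). -/
def CorrectlyPerceived (ρ : RCR n C) {m : ℕ} (A : Fin (m + 1) → Finset (Node n))
    (S : Finset (Act n C)) : Prop :=
  ∀ a ∈ S, ∀ b ∈ S, ∀ y ∈ a.mass.support,
    margP b (Finset.univ.biUnion A) y =
      margP b (A 0) y * ∏ i : Fin m, acond a (A i.succ \ A i.castSucc) (A i.castSucc) y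

/-- Expected value of `f` of the consequence under the action `a`. -/
noncomputable def outExp (a : Act n C) (f : ℝ → ℝ) : ℝ :=
  a.mass.sum (fun y w => w * f (y (Fin.last n)))

/-- Weak convergence of the consequence marginals. -/
def OutTendsto (ak : ℕ → Act n C) (a : Act n C) : Prop :=
  ∀ f : ℝ → ℝ, Continuous f →
    Tendsto (fun k => outExp (ak k) f) atTop (nhds (outExp a f))

/-- The CDF of the consequence under `a`. -/
noncomputable def outCDF (a : Act n C) (t : ℝ) : ℝ :=
  ∑ y ∈ a.mass.support.filter (fun y => y (Fin.last n) ≤ t), a.mass y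

/-- `marg_{n+1} p` strictly first-order stochastically dominates `marg_{n+1} q`. -/
def StrictFOSD (p q : Act n C) : Prop :=
  (∀ t : ℝ, outCDF p t ≤ outCDF q t) ∧ ∃ t : ℝ, outCDF p t < outCDF q t

/-- Axiom 1 (Full-support). -/
def AxiomFullSupport (ρ : RCR n C) : Prop :=
  ∀ S : Finset (Act n C), IsMenu S → ∀ a ∈ S, 0 < ρ.prob a S

/-- Axiom 2 (Bounded Misperception). -/
def AxiomBounded (ρ : RCR n C) : Prop :=
  ∃ K : ℝ, ∀ S : Finset (Act n C), IsMenu S → ∀ a ∈ S, ∀ b ∈ S,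
    ρ.prob a S / ρ.prob b S ≤ K

/-- Axiom 3 (Consistent Revealed Causes). -/
def AxiomCRC (ρ : RCR n C) : Prop :=
  ({Fin.last (n + 1)} : Finset (Node n)) ∈ MinSeps ρ ∧
    ∃ (m : ℕ) (A : Fin (m + 1) → Finset (Node n)), IsSepOrdering ρ A

/-- Axiom 4 (Indifferent If Identical Immediate Implications, I5). -/
def AxiomI5 (ρ : RCR n C) {m : ℕ} (A : Fin (m + 1) → Finset (Node n)) : Prop :=
  ∀ S : Finset (Act n C), IsMenu S → ∀ a ∈ S, ∀ b ∈ S,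
    (∀ y : Vec n, margP a (A 0) y = margP b (A 0) y) → ρ.prob a S = ρ.prob b S

/-- Axiom 5 (Luce's Choice Axiom Given Inferences, LCI). -/
def AxiomLCI (ρ : RCR n C) {m : ℕ} (A : Fin (m + 1) → Finset (Node n)) : Prop :=
  ∀ (S : Finset (Act n C)) (Sm : ℕ → Finset (Act n C)),
    IsMenu S → (∀ k, IsMenu (Sm k)) →
    ∀ a b : Act n C, a ∈ S → b ∈ S → (∀ k, a ∈ Sm k) → (∀ k, b ∈ Sm k) →
    (∀ y : Vec n, aeVec ρ S y → ∀ i : Fin m,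
      Tendsto (fun k => condVars ρ (Sm k) (A i.succ \ A i.castSucc) (A i.castSucc) y)
        atTop (nhds (condVars ρ S (A i.succ \ A i.castSucc) (A i.castSucc) y))) →
    Tendsto (fun k => ρ.prob a (Sm k) / ρ.prob b (Sm k)) atTop
      (nhds (ρ.prob a S / ρ.prob b S))

/-- Axiom 6 (Correctly Perceived Independence). -/
def AxiomCPInd (ρ : RCR n C) {m : ℕ} (A : Fin (m + 1) → Finset (Node n)) : Prop :=
  ∀ (α β : ℝ) (hα0 : 0 < α) (hα1 : α < 1) (hβ0 : 0 < β) (hβ1 : β < 1) (p r : Act n C),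
    IsMenu ({mix α hα0.le hα1.le p r, r} : Finset (Act n C)) →
    CorrectlyPerceived ρ A ({mix α hα0.le hα1.le p r, r} : Finset (Act n C)) →
    IsMenu ({mix β hβ0.le hβ1.le p r, r} : Finset (Act n C)) →
    CorrectlyPerceived ρ A ({mix β hβ0.le hβ1.le p r, r} : Finset (Act n C)) →
    β * Real.log (ρ.prob (mix α hα0.le hα1.le p r) {mix α hα0.le hα1.le p r, r} /
        ρ.prob r {mix α hα0.le hα1.le p r, r}) =
      α * Real.log (ρ.prob (mix β hβ0.le hβ1.le p r) {mix β hβ0.le hβ1.le p r, r} /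
        ρ.prob r {mix β hβ0.le hβ1.le p r, r})

/-- Axiom 7 (Correctly Perceived Dominance). -/
def AxiomCPDom (ρ : RCR n C) {m : ℕ} (A : Fin (m + 1) → Finset (Node n)) : Prop :=
  ∀ p q : Act n C, IsMenu ({p, q} : Finset (Act n C)) →
    CorrectlyPerceived ρ A ({p, q} : Finset (Act n C)) →
    StrictFOSD p q → 1 / 2 < ρ.prob p ({p, q} : Finset (Act n C))

/-- Axiom 8 (Correctly Perceived Continuity). -/
def AxiomCPCont (ρ : RCR n C) {m : ℕ} (A : Fin (m + 1) → Finset (Node n)) : Prop :=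
  ∀ (S : Finset (Act n C)) (pk qk : ℕ → Act n C) (p q : Act n C),
    IsMenu S → CorrectlyPerceived ρ A S →
    (∀ k, IsMenu ({pk k, qk k} : Finset (Act n C))) →
    (∀ k, CorrectlyPerceived ρ A ({pk k, qk k} : Finset (Act n C))) →
    p ∈ S → q ∈ S → OutTendsto pk p → OutTendsto qk q →
    Tendsto (fun k => ρ.prob (qk k) ({pk k, qk k} : Finset (Act n C)) /
        ρ.prob (pk k) ({pk k, qk k} : Finset (Act n C))) atTop
      (nhds (ρ.prob q S / ρ.prob p S))

/-- Logit expected utility representation. -/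
def HasLogitEU (ρ : RCR n C) : Prop :=
  ∃ u : ℝ → ℝ, ContinuousOn u C ∧ StrictMonoOn u C ∧
    ∀ S : Finset (Act n C), IsMenu S → ∀ a ∈ S,
      ρ.prob a S = Real.exp (outExp a u) / ∑ b ∈ S, Real.exp (outExp b u)

/-- `ρ₂` has a coarser model than `ρ₁`. -/
def Coarser (ρ₂ ρ₁ : RCR n C) : Prop :=
  ∀ S : Finset (Act n C), IsMenu S →
    (∀ j : Node n, j ∈ varNodes n → (∀ I ∈ MinSeps ρ₂, j ∉ I) →
      IndepWithin S ({j} : Finset (Node n)) (varNodes n \ {j})) →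
    ∀ a : Act n C, ρ₁.prob a S = ρ₂.prob a S

/-- The revealed DAG `R^ρ` (relative to the ordering `A`). -/
def revealedDAG (ρ : RCR n C) {m : ℕ} (A : Fin (m + 1) → Finset (Node n)) :
    Node n → Node n → Prop :=
  fun j k => RevealedCause ρ j k ∨
    ∃ i : Fin (m + 1), j ∈ withZero A i.succ \ withZero A i.castSucc ∧
      k ∈ withZero A i.succ \ withZero A i.castSucc ∧ j < k

/-!
Under a logit rule the odds of `b` against `a` in any menu are `exp (E_b u - E_a u)`. So `{n+1}`
separates, its independence condition forcing equal consequence distributions, while no set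
avoiding `n+1` separates: two point-mass acts with different consequences satisfy its independence
condition but are not indifferent. The other axioms follow from linearity of expected utility, from
`E_q u < E_p u` under strict dominance (summation by parts), and from a continuous extension of `u`.

Conversely, if `{n+1}` is the only minimal separator then every menu is correctly perceived, and
Continuity along constant sequences shows that odds within a menu depend only on the consequence
distributions and equal the odds in the corresponding binary menu. Binary odds therefore form a
cocycle, `odds a b = exp (V b - V a)` with `V` the log-odds against a fixed point-mass act, and
Independence makes `V` affine under mixing. Being affine, `V` of a distribution is the expectation
of `u c := V (δ c)`; Dominance and Continuity make `u` strictly increasing and continuous.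
-/

theorem Act.ext {a b : Act n C} (h : a.mass = b.mass) : a = b := by
  cases a; cases b; cases h; rfl

theorem Act.support_nonempty (a : Act n C) : a.mass.support.Nonempty := by
  rw [Finset.nonempty_iff_ne_empty]
  intro h
  simpa [Finsupp.sum, h] using a.total

theorem ne_of_isMenu_pair {a b : Act n C} (hm : IsMenu ({a, b} : Finset (Act n C))) : a ≠ b := by
  rintro rfl
  simpa using hm.1

theorem IsMenu.nonempty {S : Finset (Act n C)} (hS : IsMenu S) : S.Nonempty :=
  Finset.card_pos.1 (by have := hS.1; omega)

theorem IsMenu.pair {S : Finset (Act n C)} (hS : IsMenu S) {a b : Act n C} (ha : a ∈ S)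
    (hb : b ∈ S) (hab : a ≠ b) : IsMenu ({a, b} : Finset (Act n C)) := by
  have hsub : ({a, b} : Finset (Act n C)) ⊆ S :=
    Finset.insert_subset_iff.2 ⟨ha, Finset.singleton_subset_iff.2 hb⟩
  exact ⟨(Finset.card_pair hab).ge, fun x hx y hy => hS.2 x (hsub hx) y (hsub hy)⟩

noncomputable def outMarg (a : Act n C) : ℝ →₀ ℝ := a.mass.mapDomain (· (Fin.last n))

theorem outExp_eq_sum_outMarg (a : Act n C) (f : ℝ → ℝ) :
    outExp a f = (outMarg a).sum fun c w => w * f c := by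
  rw [outExp, outMarg, Finsupp.sum_mapDomain_index (fun _ => zero_mul _) fun _ _ _ => add_mul _ _ _]

theorem outExp_eq_sum_of_support_subset (a : Act n C) (f : ℝ → ℝ) {T : Finset ℝ}
    (hT : (outMarg a).support ⊆ T) : outExp a f = ∑ c ∈ T, outMarg a c * f c := by
  rw [outExp_eq_sum_outMarg]
  exact Finsupp.sum_of_support_subset _ hT (fun c w => w * f c) fun _ _ => zero_mul _

theorem outExp_one (a : Act n C) : outExp a (fun _ => 1) = 1 := by
  simpa [outExp] using a.total

theorem outExp_congr (a : Act n C) {f g : ℝ → ℝ} (h : Set.EqOn f g C) :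
    outExp a f = outExp a g :=
  Finsupp.sum_congr fun y hy => by rw [h (a.outC y hy)]

theorem outCDF_eq_outExp (a : Act n C) (t : ℝ) :
    outCDF a t = outExp a fun c => if c ≤ t then 1 else 0 := by
  simp [outCDF, outExp, Finsupp.sum, Finset.sum_filter]

theorem outMarg_apply (a : Act n C) (c : ℝ) :
    outMarg a c = ∑ y ∈ a.mass.support with y (Fin.last n) = c, a.mass y := by
  simp [outMarg, Finsupp.mapDomain, Finsupp.single_apply, Finsupp.sum,
    Finset.sum_filter]

theorem margP_last (a : Act n C) (y : Vec n) :
    margP a {Fin.last (n + 1)} y = outMarg a (y (Fin.last n)) := by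
  simp [margP, outMarg_apply, Fin.succ_eq_last_succ]

theorem outMarg_eq_of_margP_last_eq {a b : Act n C}
    (h : ∀ y, margP a {Fin.last (n + 1)} y = margP b {Fin.last (n + 1)} y) :
    outMarg a = outMarg b := by
  ext c
  simpa [margP_last] using h fun _ => c

def probDists (C : Set ℝ) : Set (ℝ →₀ ℝ) :=
  {ν | 0 ≤ ν ∧ (ν.sum fun _ w => w) = 1 ∧ ↑ν.support ⊆ C}

theorem convex_probDists : Convex ℝ (probDists C) := by
  intro ν hν μ hμ a b ha hb hab
  refine ⟨add_nonneg (smul_nonneg ha hν.1) (smul_nonneg hb hμ.1), ?_, ?_⟩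
  · rw [Finsupp.sum_add_index' (fun _ => rfl) (fun _ _ _ => rfl),
      Finsupp.sum_smul_index' (fun _ => rfl), Finsupp.sum_smul_index' (fun _ => rfl),
      ← Finsupp.smul_sum, ← Finsupp.smul_sum, hν.2.1, hμ.2.1]
    simpa using hab
  · refine (Finset.coe_subset.2 Finsupp.support_add).trans ?_
    rw [Finset.coe_union]
    exact Set.union_subset ((Finset.coe_subset.2 Finsupp.support_smul).trans hν.2.2)
      ((Finset.coe_subset.2 Finsupp.support_smul).trans hμ.2.2)

theorem single_mem_probDists {c : ℝ} (hc : c ∈ C) : Finsupp.single c 1 ∈ probDists C :=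
  ⟨Finsupp.single_nonneg.2 zero_le_one, Finsupp.sum_single_index rfl, by
    simpa using hc⟩

theorem outMarg_mem_probDists (a : Act n C) : outMarg a ∈ probDists C := by
  refine ⟨Finsupp.mapDomain_nonneg fun y => a.nonneg y, ?_, ?_⟩
  · rw [outMarg, Finsupp.sum_mapDomain_index (fun _ => rfl) fun _ _ _ => rfl]
    exact a.total
  · intro c hc
    obtain ⟨y, hy, rfl⟩ := Finset.mem_image.mp (Finsupp.mapDomain_support hc)
    exact a.outC y hy

noncomputable def Act.ofDist (ν : ℝ →₀ ℝ) (hν : ν ∈ probDists C) : Act n C where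
  mass := ν.mapDomain (Pi.single (Fin.last n))
  nonneg := Finsupp.mapDomain_nonneg hν.1
  total := by
    rw [Finsupp.sum_mapDomain_index (fun _ => rfl) fun _ _ _ => rfl]
    exact hν.2.1
  outC y hy := by
    obtain ⟨c, hc, rfl⟩ := Finset.mem_image.mp (Finsupp.mapDomain_support hy)
    simpa using hν.2.2 hc

def Act.IsStandard (a : Act n C) : Prop :=
  ∀ y ∈ a.mass.support, ∀ j : Fin n, y j.castSucc = 0

noncomputable def Act.standardize (a : Act n C) : Act n C :=
  Act.ofDist (outMarg a) (outMarg_mem_probDists a)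

noncomputable def Act.dirac (c : ℝ) (hc : c ∈ C) : Act n C :=
  Act.ofDist (Finsupp.single c 1) (single_mem_probDists hc)

theorem Act.isStandard_ofDist (ν : ℝ →₀ ℝ) (hν : ν ∈ probDists C) :
    (Act.ofDist ν hν : Act n C).IsStandard := by
  intro y hy j
  obtain ⟨c, -, rfl⟩ := Finset.mem_image.mp (Finsupp.mapDomain_support hy)
  exact Pi.single_eq_of_ne (Fin.castSucc_lt_last j).ne _

theorem Act.isStandard_standardize (a : Act n C) : a.standardize.IsStandard :=
  Act.isStandard_ofDist _ _

theorem Act.isStandard_dirac {c : ℝ} (hc : c ∈ C) : (Act.dirac c hc : Act n C).IsStandard :=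
  Act.isStandard_ofDist _ _

theorem Act.IsStandard.mix {p r : Act n C} (hp : p.IsStandard) (hr : r.IsStandard) (α : ℝ)
    (h0 : 0 ≤ α) (h1 : α ≤ 1) : (mix α h0 h1 p r).IsStandard := by
  intro y hy
  rcases Finset.mem_union.mp (Finsupp.support_add hy) with h | h
  exacts [hp y (Finsupp.support_smul h), hr y (Finsupp.support_smul h)]

theorem isMenu_of_isStandard {S : Finset (Act n C)} (hS : 2 ≤ S.card)
    (hstd : ∀ a ∈ S, a.IsStandard) : IsMenu S := by
  refine ⟨hS, fun a ha b hb x => ?_⟩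
  have hcov : ∀ j, covSupp a j = {0} := fun j => by
    obtain ⟨y, hy⟩ := a.support_nonempty
    refine Finset.eq_singleton_iff_unique_mem.2 ⟨?_, ?_⟩
    · exact Finset.mem_image.2 ⟨y, hy, hstd a ha y hy j⟩
    · simp only [covSupp, Finset.mem_image]
      rintro _ ⟨z, hz, rfl⟩
      exact hstd a ha z hz j
  obtain ⟨y, hy⟩ := b.support_nonempty
  simp only [hcov, Finset.mem_singleton]
  constructor
  · exact fun hx => ⟨y, hy, fun j => (hstd b hb y hy j).trans (hx j).symm⟩
  · rintro ⟨z, hz, hzx⟩ j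
    rw [← hzx j, hstd b hb z hz j]

theorem isMenu_pair_of_isStandard {a b : Act n C} (ha : a.IsStandard) (hb : b.IsStandard)
    (hab : a ≠ b) : IsMenu ({a, b} : Finset (Act n C)) :=
  isMenu_of_isStandard (Finset.card_pair hab).ge (by simp [ha, hb])

theorem outMarg_ofDist (ν : ℝ →₀ ℝ) (hν : ν ∈ probDists C) :
    outMarg (Act.ofDist ν hν : Act n C) = ν := by
  rw [outMarg, Act.ofDist, ← Finsupp.mapDomain_comp]
  convert Finsupp.mapDomain_id
  ext c
  simp

theorem outExp_ofDist (ν : ℝ →₀ ℝ) (hν : ν ∈ probDists C) (f : ℝ → ℝ) :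
    outExp (Act.ofDist ν hν : Act n C) f = ν.sum fun c w => w * f c := by
  rw [outExp_eq_sum_outMarg, outMarg_ofDist]

theorem outExp_standardize (a : Act n C) (f : ℝ → ℝ) : outExp a.standardize f = outExp a f := by
  rw [Act.standardize, outExp_ofDist, outExp_eq_sum_outMarg]

theorem outExp_dirac {c : ℝ} (hc : c ∈ C) (f : ℝ → ℝ) :
    outExp (Act.dirac c hc : Act n C) f = f c := by
  rw [Act.dirac, outExp_ofDist, Finsupp.sum_single_index (zero_mul _), one_mul]

theorem Act.dirac_mass {c : ℝ} (hc : c ∈ C) :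
    (Act.dirac c hc : Act n C).mass = Finsupp.single (Pi.single (Fin.last n) c) 1 :=
  Finsupp.mapDomain_single

theorem Act.dirac_ne_dirac {c d : ℝ} (hc : c ∈ C) (hd : d ∈ C) (h : c ≠ d) :
    (Act.dirac c hc : Act n C) ≠ Act.dirac d hd := fun he =>
  h (by simpa [outExp_dirac] using congrArg (outExp · id) he)

theorem margP_of_mass_eq_single {a : Act n C} {x : Vec n} (h : a.mass = Finsupp.single x 1)
    (I : Finset (Node n)) (y : Vec n) :
    margP a I y = if ∀ j : Fin (n + 1), j.succ ∈ I → x j = y j then 1 else 0 := by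
  rw [margP, h, Finsupp.support_single _ one_ne_zero, Finset.filter_singleton]
  split_ifs <;> simp

theorem indepWithin_dirac_pair {I : Finset (Node n)} (hI : Fin.last (n + 1) ∉ I)
    (J : Finset (Node n)) {c c' : ℝ} (hc : c ∈ C) (hc' : c' ∈ C) :
    IndepWithin ({Act.dirac c hc, Act.dirac c' hc'} : Finset (Act n C)) I J := by
  have hmarg : ∀ (d : ℝ) (hd : d ∈ C) K y, margP (Act.dirac d hd : Act n C) K y =
      if ∀ j : Fin (n + 1), j.succ ∈ K → (Pi.single (Fin.last n) d : Vec n) j = y j then 1 else 0 :=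
    fun d hd K y => margP_of_mass_eq_single (Act.dirac_mass hd) K y
  have hmargI : ∀ (d : ℝ) (hd : d ∈ C) y, margP (Act.dirac d hd : Act n C) I y =
      if ∀ j : Fin (n + 1), j.succ ∈ I → 0 = y j then 1 else 0 := by
    intro d hd y
    rw [hmarg]
    refine if_congr (forall_congr' fun j => imp_congr_right fun hj => ?_) rfl rfl
    rw [Pi.single_eq_of_ne]
    rintro rfl
    exact hI (by simpa using hj)
  constructor
  · simp only [Finset.mem_insert, Finset.mem_singleton]
    rintro a (rfl | rfl) b (rfl | rfl) y <;> simp only [hmargI]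
  · simp only [Finset.mem_insert, Finset.mem_singleton]
    rintro a (rfl | rfl) y <;>
      simp only [hmarg, Finset.mem_union, or_imp, forall_and, ite_zero_mul_ite_zero, one_mul,
        ite_and]

section Mixtures

variable {α : ℝ} {h0 : 0 ≤ α} {h1 : α ≤ 1}

theorem outExp_mix (p r : Act n C) (f : ℝ → ℝ) :
    outExp (mix α h0 h1 p r) f = α * outExp p f + (1 - α) * outExp r f := by
  simp only [outExp, mix]
  rw [Finsupp.sum_add_index' (fun _ => zero_mul _) (fun _ _ _ => add_mul _ _ _),
    Finsupp.sum_smul_index' (fun _ => zero_mul _), Finsupp.sum_smul_index' (fun _ => zero_mul _),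
    Finsupp.mul_sum, Finsupp.mul_sum]
  simp only [smul_eq_mul, mul_assoc]

theorem ofDist_mix {ν μ : ℝ →₀ ℝ} (hν : ν ∈ probDists C) (hμ : μ ∈ probDists C)
    (h : α • ν + (1 - α) • μ ∈ probDists C) :
    (Act.ofDist (α • ν + (1 - α) • μ) h : Act n C)
      = mix α h0 h1 (Act.ofDist ν hν) (Act.ofDist μ hμ) :=
  Act.ext (by simp [Act.ofDist, mix, Finsupp.mapDomain_add, Finsupp.mapDomain_smul])

theorem mix_self (p : Act n C) : mix α h0 h1 p p = p :=
  Act.ext (by simp [mix, ← add_smul])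

theorem mix_zero {h0' : (0 : ℝ) ≤ 0} {h1' : (0 : ℝ) ≤ 1} (p r : Act n C) :
    mix 0 h0' h1' p r = r :=
  Act.ext (by simp [mix])

theorem mix_comm {β : ℝ} (h0' : 0 ≤ β) (h1' : β ≤ 1) (hαβ : α + β = 1) (p r : Act n C) :
    mix α h0 h1 p r = mix β h0' h1' r p := by
  obtain rfl : β = 1 - α := by linarith
  exact Act.ext (by simp [mix, add_comm])

theorem mix_ne_right {p r : Act n C} (hpr : p ≠ r) (hα : 0 < α) : mix α h0 h1 p r ≠ r := by
  intro h
  apply hpr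
  apply Act.ext
  have hm := congrArg Act.mass h
  simp only [mix] at hm
  have : α • (p.mass - r.mass) = 0 :=
    calc α • (p.mass - r.mass) = (α • p.mass + (1 - α) • r.mass) - r.mass := by
          rw [smul_sub, sub_smul, one_smul]; abel
      _ = 0 := by rw [hm, sub_self]
  exact sub_eq_zero.1 ((smul_eq_zero.1 this).resolve_left hα.ne')

end Mixtures

theorem Act.dirac_ne_mix_dirac {c d y : ℝ} {hc : c ∈ C} {hd : d ∈ C} (hdc : d ≠ c)
    (hy : y ∈ C) {α : ℝ} {h0 : 0 ≤ α} {h1 : α ≤ 1} (hα : α < 1) :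
    (Act.dirac d hd : Act n C) ≠ mix α h0 h1 (Act.dirac y hy) (Act.dirac c hc) := fun h => by
  have := congrArg (outExp · fun x => if x = c then (1 : ℝ) else 0) h
  simp only [outExp_mix, outExp_dirac, if_neg hdc] at this
  split_ifs at this <;> linarith

theorem outTendsto_const (a : Act n C) : OutTendsto (fun _ => a) a :=
  fun _ _ => tendsto_const_nhds

theorem OutTendsto.congr_right {ak : ℕ → Act n C} {a b : Act n C} (h : OutTendsto ak a)
    (hab : ∀ f, outExp a f = outExp b f) : OutTendsto ak b :=
  fun f hf => hab f ▸ h f hf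

theorem OutTendsto.mix {α : ℕ → ℝ} {h0 : ∀ k, 0 ≤ α k} {h1 : ∀ k, α k ≤ 1} {α₀ : ℝ}
    {h0₀ : 0 ≤ α₀} {h1₀ : α₀ ≤ 1} (hα : Tendsto α atTop (nhds α₀)) {pk rk : ℕ → Act n C}
    {p r : Act n C} (hp : OutTendsto pk p) (hr : OutTendsto rk r) :
    OutTendsto (fun k => mix (α k) (h0 k) (h1 k) (pk k) (rk k)) (mix α₀ h0₀ h1₀ p r) :=
  fun f hf => by
    simp only [outExp_mix]
    exact (hα.mul (hp f hf)).add ((tendsto_const_nhds.sub hα).mul (hr f hf))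

theorem outTendsto_dirac {y : ℕ → ℝ} (hy : ∀ k, y k ∈ C) {c : ℝ} (hc : c ∈ C)
    (h : Tendsto y atTop (nhds c)) :
    OutTendsto (fun k => (Act.dirac (y k) (hy k) : Act n C)) (Act.dirac c hc) := fun f hf => by
  simp only [outExp_dirac]
  exact (hf.tendsto c).comp h

section Dominance

variable {α : Type*} [LinearOrder α]

theorem sum_insert_mul_eq {m : α} {T : Finset α} (hm : m ∉ T) (d u : α → ℝ) :
    ∑ c ∈ insert m T, d c * u c
      = ∑ c ∈ T, d c * (u c - u m) + (∑ c ∈ insert m T, d c) * u m := by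
  simp only [Finset.sum_insert hm, mul_sub, Finset.sum_sub_distrib, ← Finset.sum_mul]
  ring

theorem sum_filter_insert_le_of_lt {m t : α} (T : Finset α) (h : t < m) (d : α → ℝ) :
    ∑ c ∈ insert m T with c ≤ t, d c = ∑ c ∈ T with c ≤ t, d c := by
  rw [Finset.filter_insert, if_neg (not_le.2 h)]

theorem sum_filter_insert_le_of_le {m t : α} {T : Finset α} (hT : ∀ c ∈ T, c < m) (h : m ≤ t)
    (d : α → ℝ) : ∑ c ∈ insert m T with c ≤ t, d c = ∑ c ∈ insert m T, d c := by
  rw [Finset.filter_true_of_mem]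
  simp only [Finset.mem_insert]
  rintro c (rfl | hc)
  exacts [h, (hT c hc).le.trans h]

theorem sum_mul_nonneg_of_partialSums_nonpos {T : Finset α} {d u : α → ℝ} (hu : MonotoneOn u T)
    (hneg : ∀ c ∈ T, u c ≤ 0) (hd : ∀ t ∈ T, ∑ c ∈ T with c ≤ t, d c ≤ 0) :
    0 ≤ ∑ c ∈ T, d c * u c := by
  induction T using Finset.induction_on_max generalizing u with
  | empty => simp
  | insert m T hlt ih =>
    have hm : m ∉ T := fun h => lt_irrefl m (hlt m h)
    rw [sum_insert_mul_eq hm]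
    refine add_nonneg (ih ?_ ?_ ?_) (mul_nonneg_of_nonpos_of_nonpos ?_ (hneg m (by simp)))
    · exact fun x hx y hy hxy => sub_le_sub_right (hu (by simp [hx]) (by simp [hy]) hxy) _
    · exact fun c hc => sub_nonpos.2 (hu (by simp [hc]) (by simp) (hlt c hc).le)
    · exact fun t ht => sum_filter_insert_le_of_lt T (hlt t ht) d ▸ hd t (by simp [ht])
    · exact sum_filter_insert_le_of_le hlt le_rfl d ▸ hd m (by simp)

theorem sum_mul_pos_of_partialSums_nonpos {T : Finset α} {d u : α → ℝ} (hu : StrictMonoOn u T)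
    (hneg : ∀ c ∈ T, u c < 0) (hd : ∀ t ∈ T, ∑ c ∈ T with c ≤ t, d c ≤ 0)
    (hlt : ∃ t, ∑ c ∈ T with c ≤ t, d c < 0) : 0 < ∑ c ∈ T, d c * u c := by
  induction T using Finset.induction_on_max generalizing u with
  | empty => simp at hlt
  | insert m T hmax ih =>
    have hm : m ∉ T := fun h => lt_irrefl m (hmax m h)
    have hu' : StrictMonoOn (fun c => u c - u m) T :=
      fun x hx y hy hxy => sub_lt_sub_right (hu (by simp [hx]) (by simp [hy]) hxy) _
    have hneg' : ∀ c ∈ T, u c - u m < 0 :=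
      fun c hc => sub_neg.2 (hu (by simp [hc]) (by simp) (hmax c hc))
    have hd' : ∀ t ∈ T, ∑ c ∈ T with c ≤ t, d c ≤ 0 :=
      fun t ht => sum_filter_insert_le_of_lt T (hmax t ht) d ▸ hd t (by simp [ht])
    have htot : ∑ c ∈ insert m T, d c ≤ 0 :=
      sum_filter_insert_le_of_le hmax le_rfl d ▸ hd m (by simp)
    rw [sum_insert_mul_eq hm]
    obtain ⟨t, ht⟩ := hlt
    rcases le_or_gt m t with hmt | htm
    · rw [sum_filter_insert_le_of_le hmax hmt] at ht
      exact add_pos_of_nonneg_of_pos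
        (sum_mul_nonneg_of_partialSums_nonpos hu'.monotoneOn (fun c hc => (hneg' c hc).le) hd')
        (mul_pos_of_neg_of_neg ht (hneg m (by simp)))
    · rw [sum_filter_insert_le_of_lt T htm] at ht
      exact add_pos_of_pos_of_nonneg (ih hu' hneg' hd' ⟨t, ht⟩)
        (mul_nonneg_of_nonpos_of_nonpos htot (hneg m (by simp)).le)

end Dominance

theorem outExp_lt_of_strictFOSD {u : ℝ → ℝ} (hu : StrictMonoOn u C) {p q : Act n C}
    (h : StrictFOSD p q) : outExp q u < outExp p u := by
  set T := (outMarg p).support ∪ (outMarg q).support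
  have hp : ∀ f, outExp p f = ∑ c ∈ T, outMarg p c * f c :=
    fun f => outExp_eq_sum_of_support_subset p f Finset.subset_union_left
  have hq : ∀ f, outExp q f = ∑ c ∈ T, outMarg q c * f c :=
    fun f => outExp_eq_sum_of_support_subset q f Finset.subset_union_right
  have hTC : ∀ c ∈ T, c ∈ C := fun c hc => (Finset.mem_union.1 hc).elim
    (fun h => (outMarg_mem_probDists p).2.2 h) (fun h => (outMarg_mem_probDists q).2.2 h)
  obtain ⟨K, hK⟩ := (T.image u).bddAbove
  set d := fun c => outMarg p c - outMarg q c
  have hpart : ∀ t, ∑ c ∈ T with c ≤ t, d c = outCDF p t - outCDF q t := fun t => by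
    simp only [outCDF_eq_outExp, hp, hq, mul_ite, mul_one, mul_zero, ← Finset.sum_filter,
      d, Finset.sum_sub_distrib]
  -- `∑ c ∈ T, d c = 0`, so shifting `u` to be negative on `T` costs nothing
  have hdiff : outExp p u - outExp q u = ∑ c ∈ T, d c * (u c - (K + 1)) := by
    have h1 := hp fun _ => 1
    have h2 := hq fun _ => 1
    simp only [outExp_one, mul_one] at h1 h2
    simp only [hp, hq, d, sub_mul, mul_sub, Finset.sum_sub_distrib, ← Finset.sum_mul, ← h1, ← h2]
    ring
  have hpos : 0 < ∑ c ∈ T, d c * (u c - (K + 1)) := by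
    refine sum_mul_pos_of_partialSums_nonpos ?_ ?_ ?_ ?_
    · exact fun x hx y hy hxy => sub_lt_sub_right (hu (hTC x hx) (hTC y hy) hxy) _
    · exact fun c hc => by linarith [hK (Finset.mem_image_of_mem u hc)]
    · exact fun t _ => (hpart t).symm ▸ sub_nonpos.2 (h.1 t)
    · obtain ⟨t, ht⟩ := h.2
      exact ⟨t, (hpart t).symm ▸ sub_neg.2 ht⟩
  linarith

theorem strictFOSD_dirac {c c' : ℝ} (hc : c ∈ C) (hc' : c' ∈ C) (h : c < c') :
    StrictFOSD (Act.dirac c' hc' : Act n C) (Act.dirac c hc) := by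
  simp only [StrictFOSD, outCDF_eq_outExp, outExp_dirac]
  refine ⟨fun t => ?_, c, by simp [h.not_ge]⟩
  split_ifs with h1 h2
  · exact le_rfl
  · exact absurd (h.le.trans h1) h2
  · exact zero_le_one
  · exact le_rfl

def IsLogitOf (ρ : RCR n C) (u : ℝ → ℝ) : Prop :=
  ∀ S : Finset (Act n C), IsMenu S → ∀ a ∈ S,
    ρ.prob a S = Real.exp (outExp a u) / ∑ b ∈ S, Real.exp (outExp b u)

namespace IsLogitOf

variable {ρ : RCR n C} {u : ℝ → ℝ} (hρ : IsLogitOf ρ u)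
include hρ

theorem axiomFullSupport : AxiomFullSupport ρ := fun S hS a ha => by
  rw [hρ S hS a ha]
  exact div_pos (Real.exp_pos _) (Finset.sum_pos (fun _ _ => Real.exp_pos _) hS.nonempty)

theorem prob_div_prob {S : Finset (Act n C)} (hS : IsMenu S) {a b : Act n C} (ha : a ∈ S)
    (hb : b ∈ S) : ρ.prob a S / ρ.prob b S = Real.exp (outExp a u - outExp b u) := by
  rw [hρ S hS a ha, hρ S hS b hb, Real.exp_sub,
    div_div_div_cancel_right₀ (Finset.sum_pos (fun _ _ => Real.exp_pos _) hS.nonempty).ne']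

theorem prob_pair {a b : Act n C} (hm : IsMenu ({a, b} : Finset (Act n C))) :
    ρ.prob a {a, b} = Real.exp (outExp a u) / (Real.exp (outExp a u) + Real.exp (outExp b u)) := by
  rw [hρ _ hm a (by simp), Finset.sum_pair (ne_of_isMenu_pair hm)]

theorem prob_pair_eq_half_iff {a b : Act n C} (hm : IsMenu ({a, b} : Finset (Act n C))) :
    ρ.prob a {a, b} = 1 / 2 ↔ outExp a u = outExp b u := by
  rw [hρ.prob_pair hm, div_eq_iff (by positivity)]
  constructor
  · exact fun h => Real.exp_injective (by linarith)
  · intro h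
    rw [h]
    ring

theorem half_lt_prob_pair_iff {a b : Act n C} (hm : IsMenu ({a, b} : Finset (Act n C))) :
    1 / 2 < ρ.prob a {a, b} ↔ outExp b u < outExp a u := by
  rw [hρ.prob_pair hm, lt_div_iff₀ (by positivity)]
  constructor
  · exact fun h => Real.exp_lt_exp.1 (by linarith)
  · intro h
    linarith [Real.exp_lt_exp.2 h]

theorem separates_last : Separates ρ {Fin.last (n + 1)} := fun a b hm hind => by
  rw [hρ.prob_pair_eq_half_iff hm, outExp_eq_sum_outMarg, outExp_eq_sum_outMarg,
    outMarg_eq_of_margP_last_eq (hind.1 a (by simp) b (by simp))]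

theorem not_separates (hu : StrictMonoOn u C) {c c' : ℝ} (hc : c ∈ C) (hc' : c' ∈ C)
    (hcc' : c ≠ c') {I : Finset (Node n)} (hI : Fin.last (n + 1) ∉ I) : ¬ Separates ρ I := by
  intro hsep
  have hm : IsMenu ({Act.dirac c hc, Act.dirac c' hc'} : Finset (Act n C)) :=
    isMenu_pair_of_isStandard (Act.isStandard_dirac hc) (Act.isStandard_dirac hc')
      (Act.dirac_ne_dirac hc hc' hcc')
  have h := hsep _ _ hm (indepWithin_dirac_pair hI _ hc hc')
  rw [hρ.prob_pair_eq_half_iff hm, outExp_dirac, outExp_dirac] at h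
  exact hcc' (hu.injOn hc hc' h)

theorem minSeps_eq (hu : StrictMonoOn u C) (hC : C.Nontrivial) :
    MinSeps ρ = {{Fin.last (n + 1)}} := by
  obtain ⟨c, hc, c', hc', hcc'⟩ := hC
  have hnot : ∀ I, Fin.last (n + 1) ∉ I → ¬ Separates ρ I :=
    fun I hI => hρ.not_separates hu hc hc' hcc' hI
  ext I
  simp only [MinSeps, Set.mem_ofPred_eq, Set.mem_singleton_iff]
  constructor
  · rintro ⟨-, hsep, hmin⟩
    have hlast : Fin.last (n + 1) ∈ I := by_contra fun h => hnot I h hsep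
    by_contra hne
    exact hmin _ ((Finset.singleton_subset_iff.2 hlast).ssubset_of_ne (Ne.symm hne))
      hρ.separates_last
  · rintro rfl
    refine ⟨by simp [varNodes], hρ.separates_last, fun J hJ => ?_⟩
    rw [Finset.ssubset_singleton_iff.1 hJ]
    exact hnot ∅ (Finset.notMem_empty _)

theorem axiomCPInd {m : ℕ} (A : Fin (m + 1) → Finset (Node n)) : AxiomCPInd ρ A := by
  intro α β hα0 hα1 hβ0 hβ1 p r hmα _ hmβ _
  rw [hρ.prob_div_prob hmα (by simp) (by simp), hρ.prob_div_prob hmβ (by simp) (by simp),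
    Real.log_exp, Real.log_exp, outExp_mix, outExp_mix]
  ring

theorem axiomCPDom (hu : StrictMonoOn u C) {m : ℕ} (A : Fin (m + 1) → Finset (Node n)) :
    AxiomCPDom ρ A := fun _ _ hm _ hpq =>
  (hρ.half_lt_prob_pair_iff hm).2 (outExp_lt_of_strictFOSD hu hpq)

theorem axiomCPCont (hu : ContinuousOn u C) (hC : IsClosed C) {m : ℕ}
    (A : Fin (m + 1) → Finset (Node n)) : AxiomCPCont ρ A := by
  obtain ⟨g, hg⟩ := ContinuousMap.exists_restrict_eq hC ⟨C.domRestrict u, hu.domRestrict⟩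
  have hug : ∀ a : Act n C, outExp a u = outExp a g := fun a =>
    outExp_congr a fun c hc => (DFunLike.congr_fun hg ⟨c, hc⟩).symm
  intro S pk qk p q hS _ hmk _ hp hq hpk hqk
  rw [hρ.prob_div_prob hS hq hp, hug, hug]
  refine ((Real.continuous_exp.tendsto _).comp
    ((hqk g g.continuous).sub (hpk g g.continuous))).congr fun k => ?_
  rw [Function.comp_apply, hρ.prob_div_prob (hmk k) (by simp) (by simp), hug, hug]

end IsLogitOf

def lastSepOrdering (n : ℕ) : Fin 1 → Finset (Node n) := fun _ => {Fin.last (n + 1)}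

theorem correctlyPerceived_lastSepOrdering (ρ : RCR n C) (S : Finset (Act n C)) :
    CorrectlyPerceived ρ (lastSepOrdering n) S := by
  intro a _ b _ y _
  simp [lastSepOrdering]

theorem isSepOrdering_lastSepOrdering {ρ : RCR n C} (h : MinSeps ρ = {{Fin.last (n + 1)}}) :
    IsSepOrdering ρ (lastSepOrdering n) :=
  ⟨fun i j _ => Subsingleton.elim (α := Fin 1) i j, fun _ => h ▸ rfl,
    fun B hB => ⟨0, ((h ▸ hB : B ∈ ({{Fin.last (n + 1)}} : Set _))).symm⟩, rfl, fun i => i.elim0⟩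

noncomputable def odds (ρ : RCR n C) (a b : Act n C) : ℝ :=
  ρ.prob b {a, b} / ρ.prob a {a, b}

noncomputable def logOdds (ρ : RCR n C) (a b : Act n C) : ℝ := Real.log (odds ρ a b)

section Odds

variable {ρ : RCR n C}

-- `{a, a}` is not a menu, so `odds ρ a a` may be the junk value `0 / 0 = 0`; its logarithm is `0`
-- in every case.
theorem logOdds_self (a : Act n C) : logOdds ρ a a = 0 := by
  simp [logOdds, odds]

theorem odds_pos (hfs : AxiomFullSupport ρ) {a b : Act n C}
    (hm : IsMenu ({a, b} : Finset (Act n C))) : 0 < odds ρ a b :=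
  div_pos (hfs _ hm b (by simp)) (hfs _ hm a (by simp))

theorem odds_mul_odds_swap (hfs : AxiomFullSupport ρ) {a b : Act n C}
    (hm : IsMenu ({a, b} : Finset (Act n C))) : odds ρ a b * odds ρ b a = 1 := by
  have ha := (hfs _ hm a (by simp)).ne'
  have hb := (hfs _ hm b (by simp)).ne'
  rw [odds, odds, Finset.pair_comm b a]
  field_simp

theorem tendsto_odds (hcont : AxiomCPCont ρ (lastSepOrdering n)) {S : Finset (Act n C)}
    (hS : IsMenu S) {p q : Act n C} (hp : p ∈ S) (hq : q ∈ S) {pk qk : ℕ → Act n C}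
    (hm : ∀ k, IsMenu ({pk k, qk k} : Finset (Act n C))) (hpk : OutTendsto pk p)
    (hqk : OutTendsto qk q) :
    Tendsto (fun k => odds ρ (pk k) (qk k)) atTop (nhds (ρ.prob q S / ρ.prob p S)) :=
  hcont S pk qk p q hS (correctlyPerceived_lastSepOrdering ρ S) hm
    (fun _ => correctlyPerceived_lastSepOrdering ρ _) hp hq hpk hqk

theorem prob_div_prob_eq_odds (hcont : AxiomCPCont ρ (lastSepOrdering n))
    {S : Finset (Act n C)} (hS : IsMenu S) {p q p' q' : Act n C} (hp : p ∈ S) (hq : q ∈ S)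
    (hm : IsMenu ({p', q'} : Finset (Act n C))) (hp' : ∀ f, outExp p' f = outExp p f)
    (hq' : ∀ f, outExp q' f = outExp q f) : ρ.prob q S / ρ.prob p S = odds ρ p' q' :=
  tendsto_nhds_unique (tendsto_odds hcont hS hp hq (fun _ => hm)
    ((outTendsto_const p').congr_right hp') ((outTendsto_const q').congr_right hq'))
    tendsto_const_nhds

theorem odds_mul_odds (hfs : AxiomFullSupport ρ) (hcont : AxiomCPCont ρ (lastSepOrdering n))
    {a b c : Act n C} (hS : IsMenu ({a, b, c} : Finset (Act n C))) (hab : a ≠ b) (hbc : b ≠ c)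
    (hac : a ≠ c) : odds ρ a b * odds ρ b c = odds ρ a c := by
  have hodds : ∀ x ∈ ({a, b, c} : Finset (Act n C)), ∀ y ∈ ({a, b, c} : Finset (Act n C)),
      x ≠ y → odds ρ x y = ρ.prob y {a, b, c} / ρ.prob x {a, b, c} := fun x hx y hy hxy =>
    (prob_div_prob_eq_odds hcont hS hx hy (hS.pair hx hy hxy) (fun _ => rfl) fun _ => rfl).symm
  rw [hodds a (by simp) b (by simp) hab, hodds b (by simp) c (by simp) hbc,
    hodds a (by simp) c (by simp) hac, mul_comm, div_mul_div_cancel₀ (hfs _ hS b (by simp)).ne']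

theorem odds_eq_exp_logOdds_sub (hfs : AxiomFullSupport ρ)
    (hcont : AxiomCPCont ρ (lastSepOrdering n)) {e a b : Act n C} (he : e.IsStandard)
    (ha : a.IsStandard) (hb : b.IsStandard) (hab : a ≠ b) :
    odds ρ a b = Real.exp (logOdds ρ e b - logOdds ρ e a) := by
  have hexp : ∀ x, x.IsStandard → x ≠ e → Real.exp (logOdds ρ e x) = odds ρ e x := fun x hx hxe =>
    Real.exp_log (odds_pos hfs (isMenu_pair_of_isStandard he hx (Ne.symm hxe)))
  rcases eq_or_ne a e with rfl | hae
  · rw [logOdds_self, sub_zero, hexp b hb (Ne.symm hab)]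
  rcases eq_or_ne b e with rfl | hbe
  · rw [logOdds_self, zero_sub, Real.exp_neg, hexp a ha hae]
    exact eq_inv_of_mul_eq_one_left (odds_mul_odds_swap hfs (isMenu_pair_of_isStandard ha he hae))
  rw [Real.exp_sub, hexp a ha hae, hexp b hb hbe, eq_div_iff (odds_pos hfs
    (isMenu_pair_of_isStandard he ha (Ne.symm hae))).ne', mul_comm]
  refine odds_mul_odds hfs hcont (isMenu_of_isStandard ?_ (by simp [he, ha, hb]))
    (Ne.symm hae) hab (Ne.symm hbe)
  exact (Finset.card_pair hab).ge.trans (Finset.card_le_card (Finset.subset_insert _ _))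

end Odds

noncomputable def distLogOdds (ρ : RCR n C) (e : Act n C) (ν : ℝ →₀ ℝ) : ℝ :=
  if h : ν ∈ probDists C then logOdds ρ e (Act.ofDist ν h : Act n C) else 0

noncomputable def utility (ρ : RCR n C) (e : Act n C) (c : ℝ) : ℝ :=
  distLogOdds ρ e (Finsupp.single c 1)

theorem logOdds_dirac {ρ : RCR n C} {e : Act n C} {c : ℝ} (hc : c ∈ C) :
    logOdds ρ e (Act.dirac c hc) = utility ρ e c := by
  rw [utility, distLogOdds, dif_pos (single_mem_probDists hc)]
  rfl

section Utility

variable {ρ : RCR n C} {e : Act n C} (hfs : AxiomFullSupport ρ)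
  (hcont : AxiomCPCont ρ (lastSepOrdering n)) (hind : AxiomCPInd ρ (lastSepOrdering n))
  (he : e.IsStandard)
include hfs hcont hind he

theorem logOdds_mix_sub_mul_eq {p r : Act n C} (hp : p.IsStandard) (hr : r.IsStandard)
    (hpr : p ≠ r) {α β : ℝ} (hα0 : 0 < α) (hα1 : α < 1) (hβ0 : 0 < β) (hβ1 : β < 1) :
    β * (logOdds ρ e (mix α hα0.le hα1.le p r) - logOdds ρ e r)
      = α * (logOdds ρ e (mix β hβ0.le hβ1.le p r) - logOdds ρ e r) := by
  have hmenu : ∀ γ (h0 : 0 < γ) (h1 : γ < 1),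
      IsMenu ({mix γ h0.le h1.le p r, r} : Finset (Act n C)) := fun γ h0 h1 =>
    isMenu_pair_of_isStandard (hp.mix hr γ h0.le h1.le) hr (mix_ne_right hpr h0)
  have hlog : ∀ γ (h0 : 0 < γ) (h1 : γ < 1),
      Real.log (ρ.prob (mix γ h0.le h1.le p r) {mix γ h0.le h1.le p r, r} /
          ρ.prob r {mix γ h0.le h1.le p r, r})
        = logOdds ρ e (mix γ h0.le h1.le p r) - logOdds ρ e r := fun γ h0 h1 => by
    rw [Finset.pair_comm,
      show ∀ x, ρ.prob x {r, x} / ρ.prob r {r, x} = odds ρ r x from fun _ => rfl,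
      odds_eq_exp_logOdds_sub hfs hcont he hr (hp.mix hr γ h0.le h1.le)
        (mix_ne_right hpr h0).symm, Real.log_exp]
  have h := hind α β hα0 hα1 hβ0 hβ1 p r (hmenu α hα0 hα1)
    (correctlyPerceived_lastSepOrdering ρ _) (hmenu β hβ0 hβ1)
    (correctlyPerceived_lastSepOrdering ρ _)
  rwa [hlog α hα0 hα1, hlog β hβ0 hβ1] at h

theorem logOdds_mix {p r : Act n C} (hp : p.IsStandard) (hr : r.IsStandard) {α : ℝ}
    (hα0 : 0 < α) (hα1 : α < 1) :
    logOdds ρ e (mix α hα0.le hα1.le p r) = α * logOdds ρ e p + (1 - α) * logOdds ρ e r := by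
  rcases eq_or_ne p r with rfl | hpr
  · rw [mix_self]
    ring
  -- `logOdds ρ e (mix γ p r) - logOdds ρ e r` is linear in `γ ∈ (0, 1)`, and so is the same
  -- expression with `p` and `r` swapped; comparing both at the weights `1/2` and `2/3` on `p`
  -- fixes the slope.
  have h1 := logOdds_mix_sub_mul_eq hfs hcont hind he hp hr hpr hα0 hα1
    (by norm_num : (0 : ℝ) < 1 / 2) (by norm_num)
  have h2 := logOdds_mix_sub_mul_eq hfs hcont hind he hp hr hpr
    (by norm_num : (0 : ℝ) < 2 / 3) (by norm_num) (by norm_num : (0 : ℝ) < 1 / 2) (by norm_num)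
  have h3 := logOdds_mix_sub_mul_eq hfs hcont hind he hr hp hpr.symm
    (by norm_num : (0 : ℝ) < 1 / 3) (by norm_num) (by norm_num : (0 : ℝ) < 1 / 2) (by norm_num)
  rw [mix_comm (α := 1 / 3) (β := 2 / 3) (by norm_num) (by norm_num) (by norm_num) r p,
    mix_comm (α := 1 / 2) (β := 1 / 2) (by norm_num) (by norm_num) (by norm_num) r p] at h3
  linear_combination 2 * h1 - 6 * α * (h2 - h3)

theorem distLogOdds_add_smul {ν μ : ℝ →₀ ℝ} (hν : ν ∈ probDists C) (hμ : μ ∈ probDists C)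
    {a b : ℝ} (ha : 0 ≤ a) (hb : 0 ≤ b) (hab : a + b = 1) :
    distLogOdds ρ e (a • ν + b • μ) = a * distLogOdds ρ e ν + b * distLogOdds ρ e μ := by
  obtain rfl : b = 1 - a := by linarith
  rcases ha.eq_or_lt with rfl | ha0
  · simp
  rcases (show a ≤ 1 by linarith).eq_or_lt with rfl | ha1
  · simp
  have hmem := convex_probDists hν hμ ha hb hab
  rw [distLogOdds, dif_pos hmem, distLogOdds, dif_pos hν, distLogOdds, dif_pos hμ,
    ofDist_mix (h0 := ha0.le) (h1 := ha1.le) hν hμ hmem,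
    logOdds_mix hfs hcont hind he (Act.isStandard_ofDist _ _) (Act.isStandard_ofDist _ _) ha0 ha1]

theorem distLogOdds_eq_sum {ν : ℝ →₀ ℝ} (hν : ν ∈ probDists C) :
    distLogOdds ρ e ν = ν.sum fun c w => w * utility ρ e c := by
  have hconv : ConvexOn ℝ (probDists C) (distLogOdds ρ e) := ⟨convex_probDists,
    fun _ hx _ hy _ _ ha hb hab => (distLogOdds_add_smul hfs hcont hind he hx hy ha hb hab).le⟩
  have hconc : ConcaveOn ℝ (probDists C) (distLogOdds ρ e) := ⟨convex_probDists,
    fun _ hx _ hy _ _ ha hb hab => (distLogOdds_add_smul hfs hcont hind he hx hy ha hb hab).ge⟩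
  have hdecomp : ν = ∑ c ∈ ν.support, ν c • Finsupp.single c 1 := by
    conv_lhs => rw [← Finsupp.sum_single ν]
    simp [Finsupp.sum]
  have hw0 : ∀ c ∈ ν.support, 0 ≤ ν c := fun c _ => hν.1 c
  have hmem : ∀ c ∈ ν.support, Finsupp.single c 1 ∈ probDists C :=
    fun c hc => single_mem_probDists (hν.2.2 hc)
  rw [Finsupp.sum]
  conv_lhs => rw [hdecomp]
  exact le_antisymm (hconv.map_sum_le hw0 hν.2.1 hmem) (hconc.le_map_sum hw0 hν.2.1 hmem)

theorem logOdds_standardize (a : Act n C) :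
    logOdds ρ e a.standardize = outExp a (utility ρ e) := by
  rw [outExp_eq_sum_outMarg, ← distLogOdds_eq_sum hfs hcont hind he (outMarg_mem_probDists a),
    distLogOdds, dif_pos (outMarg_mem_probDists a)]
  rfl

end Utility

theorem exists_dirac_ne (hC : C.Nontrivial) (a : Act n C) :
    ∃ c, ∃ hc : c ∈ C, Act.dirac c hc ≠ a := by
  obtain ⟨c, hc, c', hc', hcc'⟩ := hC
  by_cases h : Act.dirac c hc = a
  · exact ⟨c', hc', fun h' => Act.dirac_ne_dirac hc hc' hcc' (h.trans h'.symm)⟩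
  · exact ⟨c, hc, h⟩

theorem eq_exp_div_sum_exp_of_div_eq {ι : Type*} {S : Finset ι} {w g : ι → ℝ}
    (hsum : ∑ j ∈ S, w j = 1) {i : ι} (hwi : w i ≠ 0)
    (hdiv : ∀ j ∈ S, w j / w i = Real.exp (g j - g i)) :
    w i = Real.exp (g i) / ∑ j ∈ S, Real.exp (g j) := by
  have hexp : ∀ j ∈ S, Real.exp (g j) = w j * (Real.exp (g i) / w i) := fun j hj =>
    calc Real.exp (g j) = w j / w i * Real.exp (g i) := by
          rw [hdiv j hj, Real.exp_sub, div_mul_cancel₀ _ (Real.exp_pos _).ne']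
      _ = w j * (Real.exp (g i) / w i) := by ring
  rw [Finset.sum_congr rfl hexp, ← Finset.sum_mul, hsum, one_mul]
  field_simp

theorem strictMonoOn_utility {ρ : RCR n C} {e : Act n C} (hfs : AxiomFullSupport ρ)
    (hcont : AxiomCPCont ρ (lastSepOrdering n)) (hdom : AxiomCPDom ρ (lastSepOrdering n))
    (he : e.IsStandard) : StrictMonoOn (utility ρ e) C := by
  intro c hc c' hc' hlt
  have hne := Act.dirac_ne_dirac (n := n) hc hc' hlt.ne
  have hm := isMenu_pair_of_isStandard (Act.isStandard_dirac hc) (Act.isStandard_dirac hc') hne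
  have hhalf := hdom _ _ (Finset.pair_comm (Act.dirac c hc) _ ▸ hm)
    (correctlyPerceived_lastSepOrdering ρ _) (strictFOSD_dirac hc hc' hlt)
  have hsum := ρ.sum_one _ hm
  rw [Finset.sum_pair hne, Finset.pair_comm] at hsum
  have hodds : 1 < odds ρ (Act.dirac c hc) (Act.dirac c' hc') := by
    rw [odds, Finset.pair_comm, one_lt_div (hfs _ (Finset.pair_comm (Act.dirac c hc) _ ▸ hm) _
      (by simp))]
    linarith
  rw [odds_eq_exp_logOdds_sub hfs hcont he (Act.isStandard_dirac hc) (Act.isStandard_dirac hc')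
    hne, logOdds_dirac, logOdds_dirac, Real.one_lt_exp_iff] at hodds
  linarith

section Backward

variable {ρ : RCR n C} {e : Act n C} (hfs : AxiomFullSupport ρ)
  (hcont : AxiomCPCont ρ (lastSepOrdering n)) (hind : AxiomCPInd ρ (lastSepOrdering n))
  (he : e.IsStandard) (hC : C.Nontrivial)
include hfs hcont hind he hC

theorem prob_div_prob_eq_one_of_standardize_eq {S : Finset (Act n C)} (hS : IsMenu S)
    {p q : Act n C} (hp : p ∈ S) (hq : q ∈ S) (hpq : p.standardize = q.standardize) :
    ρ.prob q S / ρ.prob p S = 1 := by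
  -- `{x, x}` is not a menu: approach `q` by `x` perturbed towards a point mass `δ c ≠ x`.
  set x := q.standardize
  obtain ⟨c, hc, hcx⟩ := exists_dirac_ne hC x
  obtain ⟨t, -, htI, ht⟩ := exists_seq_strictAnti_tendsto' (zero_lt_one' ℝ)
  have ht0 : ∀ k, 0 < t k := fun k => (htI k).1
  have ht1 : ∀ k, t k < 1 := fun k => (htI k).2
  have hx : x.IsStandard := Act.isStandard_ofDist _ _
  have hδ := Act.isStandard_dirac (n := n) hc
  set qk : ℕ → Act n C := fun k => mix (t k) (ht0 k).le (ht1 k).le (Act.dirac c hc) x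
  have hqk_std : ∀ k, (qk k).IsStandard := fun k => hδ.mix hx _ _ _
  have hqk_ne : ∀ k, x ≠ qk k := fun k => (mix_ne_right hcx (ht0 k)).symm
  have hqk : OutTendsto qk q := by
    have := OutTendsto.mix (h0 := fun k => (ht0 k).le) (h1 := fun k => (ht1 k).le)
      (h0₀ := le_rfl) (h1₀ := zero_le_one) ht
      (outTendsto_const (Act.dirac c hc)) (outTendsto_const x)
    rw [mix_zero] at this
    exact this.congr_right (outExp_standardize q)
  have hpx : ∀ f, outExp x f = outExp p f := by
    rw [← hpq]
    exact outExp_standardize p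
  have hlim := tendsto_odds hcont hS hp hq
    (fun k => isMenu_pair_of_isStandard hx (hqk_std k) (hqk_ne k))
    ((outTendsto_const x).congr_right hpx) hqk
  refine tendsto_nhds_unique hlim ?_
  have hodds : ∀ k, odds ρ x (qk k)
      = Real.exp (t k * (logOdds ρ e (Act.dirac c hc) - logOdds ρ e x)) := fun k => by
    rw [odds_eq_exp_logOdds_sub hfs hcont he hx (hqk_std k) (hqk_ne k),
      logOdds_mix hfs hcont hind he hδ hx (ht0 k) (ht1 k)]
    ring_nf
  simp only [hodds]
  have := (Real.continuous_exp.tendsto _).comp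
    (ht.mul_const (logOdds ρ e (Act.dirac c hc) - logOdds ρ e x))
  rwa [zero_mul, Real.exp_zero] at this

theorem prob_div_prob_eq_exp_utility {S : Finset (Act n C)} (hS : IsMenu S) {p q : Act n C}
    (hp : p ∈ S) (hq : q ∈ S) :
    ρ.prob q S / ρ.prob p S = Real.exp (outExp q (utility ρ e) - outExp p (utility ρ e)) := by
  rw [← logOdds_standardize hfs hcont hind he q, ← logOdds_standardize hfs hcont hind he p]
  by_cases hpq : p.standardize = q.standardize
  · rw [hpq, sub_self, Real.exp_zero]
    exact prob_div_prob_eq_one_of_standardize_eq hfs hcont hind he hC hS hp hq hpq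
  · rw [prob_div_prob_eq_odds hcont hS hp hq
      (isMenu_pair_of_isStandard p.isStandard_standardize q.isStandard_standardize hpq)
      (outExp_standardize p) (outExp_standardize q)]
    exact odds_eq_exp_logOdds_sub hfs hcont he p.isStandard_standardize
      q.isStandard_standardize hpq

theorem continuousOn_utility : ContinuousOn (utility ρ e) C := by
  rw [continuousOn_iff_continuous_domRestrict]
  refine continuous_iff_seqContinuous.2 fun x c₀ hx => ?_
  obtain ⟨d, hd, hdc⟩ := hC.exists_ne c₀.1
  have hδ : ∀ c (hc : c ∈ C), (Act.dirac c hc : Act n C).IsStandard :=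
    fun c hc => Act.isStandard_dirac hc
  -- `δ (x k)` may equal `δ d`; mixing in `δ c₀` keeps every `{δ d, qk k}` a menu
  set qk : ℕ → Act n C := fun k =>
    mix (1 / 2) (by norm_num) (by norm_num) (Act.dirac (x k) (x k).2) (Act.dirac c₀ c₀.2)
  have hqk_ne : ∀ k, Act.dirac d hd ≠ qk k := fun k => Act.dirac_ne_mix_dirac hdc _ (by norm_num)
  have hqk : OutTendsto qk (Act.dirac c₀ c₀.2) := by
    have : OutTendsto qk (mix (1 / 2) (by norm_num) (by norm_num) (Act.dirac c₀ c₀.2)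
        (Act.dirac c₀ c₀.2)) := OutTendsto.mix tendsto_const_nhds
      (outTendsto_dirac (fun k => (x k).2) c₀.2 (continuous_subtype_val.tendsto c₀ |>.comp hx))
      (outTendsto_const _)
    rwa [mix_self] at this
  have hS := isMenu_pair_of_isStandard (hδ d hd) (hδ c₀ c₀.2) (Act.dirac_ne_dirac hd c₀.2 hdc)
  have hlim := tendsto_odds hcont hS (by simp) (by simp)
    (fun k => isMenu_pair_of_isStandard (hδ d hd) ((hδ _ _).mix (hδ _ _) _ _ _) (hqk_ne k))
    (outTendsto_const _) hqk
  have hodds : ∀ k, odds ρ (Act.dirac d hd) (qk k) = Real.exp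
      (1 / 2 * utility ρ e (x k) + (1 - 1 / 2) * utility ρ e c₀ - utility ρ e d) := fun k => by
    rw [odds_eq_exp_logOdds_sub hfs hcont he (hδ d hd) ((hδ _ _).mix (hδ _ _) _ _ _) (hqk_ne k),
      logOdds_mix hfs hcont hind he (hδ _ _) (hδ _ _) (by norm_num) (by norm_num),
      logOdds_dirac, logOdds_dirac, logOdds_dirac]
  rw [show ρ.prob (Act.dirac c₀ c₀.2) {Act.dirac d hd, Act.dirac c₀ c₀.2} /
      ρ.prob (Act.dirac d hd) {Act.dirac d hd, Act.dirac c₀ c₀.2}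
      = odds ρ (Act.dirac d hd) (Act.dirac c₀ c₀.2) from rfl,
    odds_eq_exp_logOdds_sub hfs hcont he (hδ d hd) (hδ c₀ c₀.2)
      (Act.dirac_ne_dirac hd c₀.2 hdc), logOdds_dirac, logOdds_dirac] at hlim
  have hlog := ((Real.continuousAt_log (Real.exp_pos _).ne').tendsto.comp
    (hlim.congr hodds)).const_mul 2
  simp only [Function.comp_def, Real.log_exp] at hlog
  convert hlog.add_const (2 * utility ρ e d - utility ρ e c₀) using 2 <;>
    simp only [Function.comp_apply, Set.domRestrict_apply] <;> ring

theorem isLogitOf_utility : IsLogitOf ρ (utility ρ e) := fun S hS a ha =>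
  eq_exp_div_sum_exp_of_div_eq (ρ.sum_one S hS) (hfs S hS a ha).ne' fun _ hb =>
    prob_div_prob_eq_exp_utility hfs hcont hind he hC hS ha hb

end Backward

/-- Corollary: characterization of Logit-EU representations. -/
theorem stmt6 (n : ℕ) (C : Set ℝ) (hC : IsCompact C) (hC2 : ∃ x ∈ C, ∃ y ∈ C, x ≠ y)
    (ρ : RCR n C) :
    HasLogitEU ρ ↔
      (MinSeps ρ = {({Fin.last (n + 1)} : Finset (Node n))} ∧ AxiomFullSupport ρ ∧
        ∀ (m : ℕ) (A : Fin (m + 1) → Finset (Node n)), IsSepOrdering ρ A →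
          AxiomCPInd ρ A ∧ AxiomCPDom ρ A ∧ AxiomCPCont ρ A) := by
  constructor
  · rintro ⟨u, hu_cont, hu_mono, hρ : IsLogitOf ρ u⟩
    exact ⟨hρ.minSeps_eq hu_mono hC2, hρ.axiomFullSupport, fun _ A _ =>
      ⟨hρ.axiomCPInd A, hρ.axiomCPDom hu_mono A, hρ.axiomCPCont hu_cont hC.isClosed A⟩⟩
  · rintro ⟨hms, hfs, hax⟩
    obtain ⟨hind, hdom, hcont⟩ := hax 0 _ (isSepOrdering_lastSepOrdering hms)
    obtain ⟨c, hc⟩ := Set.Nontrivial.nonempty hC2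
    have he := Act.isStandard_dirac (n := n) hc
    exact ⟨utility ρ (Act.dirac c hc), continuousOn_utility hfs hcont hind he hC2,
      strictMonoOn_utility hfs hcont hdom he, isLogitOf_utility hfs hcont hind he hC2⟩

end SubjCausality
end

section
/- Let R be a perfect DAG and let (i_0,…,i_m) be an R-AP. If ¬(i_j R i_k) for some indices j < k ≤ m, then ¬(i_j R i_l) for all l with k < l ≤ m. Equivalently, for any j < k < m, if i_j R i_{k+1} then i_j R i_k. -/
open scoped Classical BigOperators
open Filter

/- Acyclicity orients the edge that perfection puts between the parents `a` and `b` of `c`: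
an arrow `b → a` would close a cycle with `hab`. -/
theorem rel_of_transGen_of_rel_of_rel {α : Type*} {R : α → α → Prop}
    (hacyc : ∀ a, ¬ Relation.TransGen R a a)
    (hperf : ∀ a b c, a ≠ b → R a c → R b c → R a b ∨ R b a)
    {a b c : α} (hab : Relation.TransGen R a b) (hac : R a c) (hbc : R b c) : R a b := by
  have hne : a ≠ b := fun h => hacyc a (h ▸ hab)
  exact (hperf a b c hne hac hbc).resolve_right fun hba => hacyc a (hab.tail hba)

theorem List.IsChain.transGen_getElem {α : Type*} {R : α → α → Prop} {l : List α}
    (hc : l.IsChain R) {j k : ℕ} (hk : k < l.length) (hjk : j < k) :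
    Relation.TransGen R l[j] l[k] :=
  List.pairwise_iff_getElem.mp
    (List.isChain_iff_pairwise.mp (hc.imp fun _ _ => Relation.TransGen.single)) j k _ hk hjk

section PerfectChain

variable {α : Type*} {R : α → α → Prop} {l : List α}
  (hacyc : ∀ a, ¬ Relation.TransGen R a a)
  (hperf : ∀ a b c, a ≠ b → R a c → R b c → R a b ∨ R b a)
  (hc : l.IsChain R)
include hacyc hperf hc

theorem List.IsChain.rel_getElem_of_rel_getElem_succ {j k : ℕ} (hk : k + 1 < l.length)
    (hjk : j < k) (h : R l[j] l[k + 1]) : R l[j] l[k] :=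
  rel_of_transGen_of_rel_of_rel hacyc hperf (hc.transGen_getElem _ hjk) h
    (List.isChain_iff_getElem.mp hc k hk)

theorem List.IsChain.rel_getElem_of_rel_getElem_of_le {j k L : ℕ} (hL : L < l.length)
    (hjk : j < k) (hkL : k ≤ L) (h : R l[j] l[L]) : R l[j] l[k] := by
  induction L, hkL using Nat.le_induction with
  | base => exact h
  | succ L hkL ih =>
    exact ih (by omega) (hc.rel_getElem_of_rel_getElem_succ hacyc hperf hL (by omega) h)

end PerfectChain

namespace SubjCausality

/-- along an active path of a perfect DAG, once a shortcut link fails it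
fails forever; equivalently backward links of shortcuts exist. -/
theorem stmt17 (n : ℕ) (R : Node n → Node n → Prop)
    (hdag : IsDAGRel R) (hperf : IsPerfect R)
    (l : List (Node n)) (hap : IsAP R l) :
    (∀ j k L : Fin l.length, j < k → k < L →
      ¬ R (l.get j) (l.get k) → ¬ R (l.get j) (l.get L)) ∧
    (∀ (j k : ℕ) (hk1 : k + 1 < l.length) (hjk : j < k),
      R (l.get ⟨j, by omega⟩) (l.get ⟨k + 1, hk1⟩) →
      R (l.get ⟨j, by omega⟩) (l.get ⟨k, by omega⟩)) := by
  obtain ⟨-, -, -, hc⟩ := hap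
  refine ⟨fun j k L hjk hkL hnjk hjL => hnjk ?_, fun j k hk1 hjk =>
    hc.rel_getElem_of_rel_getElem_succ hdag hperf hk1 hjk⟩
  exact hc.rel_getElem_of_rel_getElem_of_le hdag hperf L.isLt hjk hkL.le hjL

end SubjCausality
end
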